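/- Let G be a connected graph with a set V^∞ ⊆ V(G) of undeletable vertices and a set T_b ⊆ V(G) of border terminals, and let q and k be nonnegative integers. If G contains neither a (q, k)-good node separation nor a (q, k)-flower separation with regard to T_b, then for every Z ⊆ V(G) \ V^∞ with |Z| ≤ k, the graph G − Z contains at most (2q + 2)(2^k − 1) + |T_b| + 1 connected components containing a vertex of V(G) \ V^∞, out of which at most one has more than q vertices not in V^∞. -/

import Mathlib

/-- A multigraph on vertex type `V` with edge type `E`: each edge has an
unordered pair of endpoints. -/
structure Multigraph (V : Type*) (E : Type*) where
  ends : E → Sym2 V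

namespace Multigraph

variable {V E : Type*}

/-- The multigraph has no self-loops. -/
def Loopless (G : Multigraph V E) : Prop := ∀ e : E, ¬ (G.ends e).IsDiag

/-- Two vertices are adjacent if some edge joins them. -/
def Adj (G : Multigraph V E) (a b : V) : Prop := ∃ e : E, G.ends e = s(a, b)

/-- The (open) neighbourhood of a vertex. -/
def nbhd (G : Multigraph V E) (v : V) : Set V := {u | G.Adj v u}

/-- The neighbourhood `N_G(D)` of a set of vertices. -/
def setNbhd (G : Multigraph V E) (D : Set V) : Set V :=
  {u | u ∉ D ∧ ∃ d ∈ D, G.Adj u d}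

/-- One step along an edge of `G − (X, F)`. -/
def Step (G : Multigraph V E) (X : Set V) (F : Set E) (a b : V) : Prop :=
  a ∉ X ∧ b ∉ X ∧ ∃ e : E, e ∉ F ∧ G.ends e = s(a, b)

/-- `u` and `v` lie in the same connected component of `G − (X, F)`. -/
def Conn (G : Multigraph V E) (X : Set V) (F : Set E) (u v : V) : Prop :=
  u ∉ X ∧ v ∉ X ∧ Relation.ReflTransGen (G.Step X F) u v

end Multigraph

/-- `R` is an equivalence relation on the set `T` (and vanishes outside `T`). -/
def IsEquivOn {V : Type*} (T : Set V) (R : V → V → Prop) : Prop :=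
  (∀ u v, R u v → u ∈ T ∧ v ∈ T) ∧ (∀ u ∈ T, R u u) ∧
    (∀ u v, R u v → R v u) ∧ (∀ u v w, R u v → R v w → R u w)

/-- `(X, F)` is a solution to the MMCU instance `(G, T, R, k, l)`. -/
def IsSolution {V E : Type*} (G : Multigraph V E) (T : Set V) (R : V → V → Prop)
    (k l : ℕ) (X : Set V) (F : Set E) : Prop :=
  X ⊆ Tᶜ ∧ X.ncard ≤ k ∧ F.ncard ≤ l ∧
    ∀ u ∈ T, ∀ v ∈ T, (G.Conn X F u v ↔ R u v)

/-- `(X, F)` is a minimal solution to the MMCU instance `(G, T, R, k, l)`. -/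
def IsMinSolution {V E : Type*} (G : Multigraph V E) (T : Set V) (R : V → V → Prop)
    (k l : ℕ) (X : Set V) (F : Set E) : Prop :=
  IsSolution G T R k l X F ∧
    ∀ X' F', IsSolution G T R k l X' F' → X' ⊆ X → F' ⊆ F → X' = X ∧ F' = F

/-- `C` is the vertex set of a connected component of `G − Z`. -/
def IsCompOf {V E : Type*} (G : Multigraph V E) (Z : Set V) (C : Set V) : Prop :=
  ∃ v, v ∉ Z ∧ C = {w | G.Conn Z ∅ v w}

/-- `(Z, V1, V2)` is a `(q, k)`-good node separation of `G` with undeletable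
vertices `Vinf`. -/
def GoodNodeSep {V E : Type*} (G : Multigraph V E) (Vinf : Set V) (q k : ℕ)
    (Z V1 V2 : Set V) : Prop :=
  Z.ncard ≤ k ∧ Z ∩ Vinf = ∅ ∧ IsCompOf G Z V1 ∧ IsCompOf G Z V2 ∧ V1 ≠ V2 ∧
    q < (V1 \ Vinf).ncard ∧ q < (V2 \ Vinf).ncard

/-- `(Z, (P i)_{i})` is a `(q, k)`-flower separation in `G` with regard to border
terminals `Tb`, with undeletable vertices `Vinf`. -/
def FlowerSep {V E : Type*} (G : Multigraph V E) (Vinf Tb : Set V) (q k : ℕ)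
    (Z : Set V) {r : ℕ} (P : Fin r → Set V) : Prop :=
  1 ≤ Z.ncard ∧ Z.ncard ≤ k ∧ Z ∩ Vinf = ∅ ∧
    (∀ i, IsCompOf G Z (P i)) ∧ (∀ i j, i ≠ j → P i ≠ P j) ∧
    q < ((Set.univ \ (Z ∪ ⋃ i, P i)) \ Vinf).ncard ∧
    (∀ i, P i ∩ Tb = ∅ ∧ (P i \ Vinf).ncard ≤ q ∧ G.setNbhd (P i) = Z) ∧
    q < ((⋃ i, P i) \ Vinf).ncard

/-!
The components of `G − Z` containing a vertex outside `V^∞` are of three kinds. At most one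
has more than `q` such vertices, otherwise they would form a good node separation with `Z`.
At most `|T_b|` meet `T_b`, since components are disjoint. Each remaining (small) component `C`
has as neighbourhood a nonempty `S ⊆ Z` (by connectivity), and `C` is then also a component of
`G − S`; `2q + 2` small components with the same neighbourhood `S` would yield a flower around
`S`, so there are at most `(2q + 1)(2^|Z| − 1)` of them. For `Z = ∅` connectivity leaves a
single component.
-/

namespace Multigraph

variable {V E : Type*} {G : Multigraph V E} {X : Set V} {F : Set E} {u v w : V}

lemma Step.symm (h : G.Step X F u v) : G.Step X F v u := by
  obtain ⟨hu, hv, e, heF, he⟩ := h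
  exact ⟨hv, hu, e, heF, he.trans Sym2.eq_swap⟩

lemma Conn.refl (hv : v ∉ X) : G.Conn X F v v := ⟨hv, hv, .refl⟩

lemma Conn.symm (h : G.Conn X F u v) : G.Conn X F v u :=
  ⟨h.2.1, h.1, Relation.ReflTransGen.mono (fun _ _ => Step.symm) _ _
    (Relation.ReflTransGen.swap _ _ h.2.2)⟩

lemma Conn.trans (huv : G.Conn X F u v) (hvw : G.Conn X F v w) : G.Conn X F u w :=
  ⟨huv.1, hvw.2.1, huv.2.2.trans hvw.2.2⟩

end Multigraph

open Multigraph

namespace IsCompOf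

variable {V E : Type*} {G : Multigraph V E} {Z C D : Set V} {x y : V}

lemma notMem (hC : IsCompOf G Z C) (hx : x ∈ C) : x ∉ Z := by
  obtain ⟨v, -, rfl⟩ := hC
  exact hx.2.1

lemma eq_setOf_conn (hC : IsCompOf G Z C) (hx : x ∈ C) : C = {w | G.Conn Z ∅ x w} := by
  obtain ⟨v, -, rfl⟩ := hC
  ext w
  exact ⟨hx.symm.trans, hx.trans⟩

lemma eq_of_mem_of_mem (hC : IsCompOf G Z C) (hD : IsCompOf G Z D) (hxC : x ∈ C)
    (hxD : x ∈ D) : C = D := by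
  rw [hC.eq_setOf_conn hxC, hD.eq_setOf_conn hxD]

lemma mem_of_step (hC : IsCompOf G Z C) (hx : x ∈ C) (h : G.Step Z ∅ x y) : y ∈ C := by
  obtain ⟨v, -, rfl⟩ := hC
  exact ⟨hx.1, h.2.1, hx.2.2.tail h⟩

lemma setNbhd_subset (hC : IsCompOf G Z C) : G.setNbhd C ⊆ Z := by
  rintro u ⟨huC, d, hd, e, he⟩
  by_contra huZ
  exact huC (hC.mem_of_step hd ⟨hC.notMem hd, huZ, e, id, he.trans Sym2.eq_swap⟩)

/-- A component of `G − Z` is also a component of `G − N(C)`: leaving `C` along an edge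
already means entering `N(C)`. -/
lemma of_setNbhd (hC : IsCompOf G Z C) : IsCompOf G (G.setNbhd C) C := by
  obtain ⟨v, hvZ, rfl⟩ := hC
  have hC : IsCompOf G Z {w | G.Conn Z ∅ v w} := ⟨v, hvZ, rfl⟩
  have hvC : v ∈ {w | G.Conn Z ∅ v w} := Conn.refl hvZ
  refine ⟨v, fun hv => hv.1 hvC, Set.ext fun w => ⟨fun hw => ?_, fun hw => ?_⟩⟩
  · refine ⟨fun hv => hv.1 hvC, fun hw' => hw'.1 hw,
      Relation.ReflTransGen.mono (fun a b hab => ?_) _ _ hw.2.2⟩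
    exact ⟨fun ha => hab.1 (hC.setNbhd_subset ha), fun hb => hab.2.1 (hC.setNbhd_subset hb),
      hab.2.2⟩
  · obtain ⟨-, -, hp⟩ := hw
    induction hp with
    | refl => exact hvC
    | @tail b c _ hbc hb =>
      obtain ⟨-, hcN, e, -, he⟩ := hbc
      by_contra hc
      exact hcN ⟨hc, b, hb, e, he.trans Sym2.eq_swap⟩

lemma setNbhd_nonempty (hconn : ∀ u v : V, G.Conn ∅ ∅ u v) (hC : IsCompOf G Z C)
    (hZ : Z.Nonempty) : (G.setNbhd C).Nonempty := by
  obtain ⟨v, hvC⟩ : C.Nonempty := let ⟨v, hv, hCv⟩ := hC; ⟨v, hCv ▸ Conn.refl hv⟩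
  obtain ⟨z, hz⟩ := hZ
  by_contra! hN
  suffices ∀ w, Relation.ReflTransGen (G.Step ∅ ∅) v w → w ∈ C from
    hC.notMem (this z (hconn v z).2.2) hz
  intro w hp
  induction hp with
  | refl => exact hvC
  | @tail b c _ hbc hb =>
    obtain ⟨-, -, e, -, he⟩ := hbc
    by_contra hc
    exact (Set.eq_empty_iff_forall_notMem.1 hN) c ⟨hc, b, hb, e, he.trans Sym2.eq_swap⟩

end IsCompOf

lemma ncard_le_ncard_of_forall_isCompOf_inter_nonempty {V E : Type*} {G : Multigraph V E}
    {Z W : Set V} {𝒞 : Set (Set V)} (h𝒞 : ∀ C ∈ 𝒞, IsCompOf G Z C ∧ (C ∩ W).Nonempty)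
    (hW : W.Finite := by toFinite_tac) : 𝒞.ncard ≤ W.ncard := by
  have : Finite W := hW
  choose f hf using fun C : 𝒞 => (h𝒞 C C.2).2
  have hinj : Function.Injective fun C : 𝒞 => (⟨f C, (hf C).2⟩ : W) := fun C D hCD =>
    Subtype.ext <| (h𝒞 C C.2).1.eq_of_mem_of_mem (h𝒞 D D.2).1 (hf C).1
      (by rw [show f C = f D from congrArg Subtype.val hCD]; exact (hf D).1)
  simpa only [Nat.card_coe_set_eq] using Nat.card_le_card_of_injective _ hinj

lemma Set.ncard_le_mul_ncard_of_mapsTo {α β : Type*} {A : Set α} {B : Set β} {f : α → β}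
    (hA : A.Finite) (hB : B.Finite) (hf : Set.MapsTo f A B) (m : ℕ)
    (hm : ∀ b ∈ B, (A ∩ f ⁻¹' {b}).ncard ≤ m) : A.ncard ≤ m * B.ncard := by
  classical
  rw [Set.ncard_eq_toFinset_card A hA, Set.ncard_eq_toFinset_card B hB]
  refine Finset.card_le_mul_card_image_of_maps_to
    (fun a ha => by simpa using hf (by simpa using ha)) m fun b hb => ?_
  convert hm b (by simpa using hb) using 1
  rw [Set.ncard_eq_toFinset_card _ (hA.inter_of_left _)]
  congr 1
  ext
  simp

section Counting

variable {V E : Type*} {G : Multigraph V E} {Vinf Tb Z : Set V} {q k : ℕ}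

/-- The components of `G − Z` that can serve as petals of a flower around their neighbourhood. -/
def IsSmallComp (G : Multigraph V E) (Vinf Tb : Set V) (q : ℕ) (Z C : Set V) : Prop :=
  IsCompOf G Z C ∧ (C \ Vinf).Nonempty ∧ C ∩ Tb = ∅ ∧ (C \ Vinf).ncard ≤ q

/-- Of `2q + 2` small components with the same neighbourhood `S`, any `q + 1` form the petals
of a flower around `S`; the other `q + 1` lie in its stalk. -/
theorem exists_flowerSep_of_le_ncard [Finite V] {S : Set V} {𝓟 : Set (Set V)}
    (hS : S.Nonempty) (hSk : S.ncard ≤ k) (hSV : S ∩ Vinf = ∅)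
    (h𝓟 : ∀ C ∈ 𝓟, IsSmallComp G Vinf Tb q S C ∧ G.setNbhd C = S)
    (hcard : 2 * q + 2 ≤ 𝓟.ncard) :
    ∃ (r : ℕ) (P : Fin r → Set V), FlowerSep G Vinf Tb q k S P := by
  obtain ⟨A, hA𝓟, hAcard⟩ := Set.exists_subset_card_eq (show q + 1 ≤ 𝓟.ncard by omega)
  obtain ⟨r, P, hPinj, hPA⟩ := A.toFinite.fin_param
  have hP (i : Fin r) : IsSmallComp G Vinf Tb q S (P i) ∧ G.setNbhd (P i) = S :=
    h𝓟 _ (hA𝓟 (hPA ▸ Set.mem_range_self i))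
  have hUnion : ⋃ i, P i = ⋃₀ A := by rw [← Set.sUnion_range, hPA]
  refine ⟨r, P, (Set.ncard_pos S.toFinite).2 hS, hSk, hSV, fun i => (hP i).1.1,
    fun i j hij => hPinj.ne hij, ?_, fun i => ⟨(hP i).1.2.2.1, (hP i).1.2.2.2, (hP i).2⟩, ?_⟩
  · have hrest : q + 1 ≤ (𝓟 \ A).ncard := by rw [Set.ncard_sdiff hA𝓟]; omega
    refine Nat.lt_of_lt_of_le hrest (ncard_le_ncard_of_forall_isCompOf_inter_nonempty
      fun C ⟨hC𝓟, hCA⟩ => ⟨(h𝓟 C hC𝓟).1.1, ?_⟩)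
    obtain ⟨x, hxC, hxV⟩ := (h𝓟 C hC𝓟).1.2.1
    refine ⟨x, hxC, ⟨trivial, ?_⟩, hxV⟩
    rintro (hxS | hxP)
    · exact (h𝓟 C hC𝓟).1.1.notMem hxC hxS
    · rw [hUnion] at hxP
      obtain ⟨D, hDA, hxD⟩ := hxP
      exact hCA ((h𝓟 C hC𝓟).1.1.eq_of_mem_of_mem (h𝓟 D (hA𝓟 hDA)).1.1 hxC hxD ▸ hDA)
  · rw [hUnion]
    refine Nat.lt_of_lt_of_le (by omega) (ncard_le_ncard_of_forall_isCompOf_inter_nonempty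
      fun C hCA => ⟨(h𝓟 C (hA𝓟 hCA)).1.1, ?_⟩)
    obtain ⟨x, hxC, hxV⟩ := (h𝓟 C (hA𝓟 hCA)).1.2.1
    exact ⟨x, hxC, ⟨C, hCA, hxC⟩, hxV⟩

theorem ncard_isSmallComp_le [Finite V] (hconn : ∀ u v : V, G.Conn ∅ ∅ u v)
    (hnf : ¬ ∃ (Z : Set V) (r : ℕ) (P : Fin r → Set V), FlowerSep G Vinf Tb q k Z P)
    (hZ : Z.Nonempty) (hZV : Z ⊆ Vinfᶜ) (hZk : Z.ncard ≤ k) :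
    {C | IsSmallComp G Vinf Tb q Z C}.ncard ≤ (2 * q + 1) * (2 ^ Z.ncard - 1) := by
  have hmaps : Set.MapsTo G.setNbhd {C | IsSmallComp G Vinf Tb q Z C} (𝒫 Z \ {∅}) :=
    fun C hC => ⟨hC.1.setNbhd_subset, (hC.1.setNbhd_nonempty hconn hZ).ne_empty⟩
  have hfib : ∀ S ∈ 𝒫 Z \ {∅},
      ({C | IsSmallComp G Vinf Tb q Z C} ∩ G.setNbhd ⁻¹' {S}).ncard ≤ 2 * q + 1 := by
    rintro S ⟨hSZ, hS⟩
    by_contra! hcard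
    refine hnf ⟨S, exists_flowerSep_of_le_ncard (Set.nonempty_iff_ne_empty.2 hS)
      ((Set.ncard_le_ncard hSZ).trans hZk)
      (Set.eq_empty_of_forall_notMem fun x hx => hZV (hSZ hx.1) hx.2)
      ?_ hcard⟩
    rintro C ⟨hC, hCS : G.setNbhd C = S⟩
    exact ⟨⟨hCS ▸ hC.1.of_setNbhd, hC.2⟩, hCS⟩
  calc {C | IsSmallComp G Vinf Tb q Z C}.ncard
      ≤ (2 * q + 1) * (𝒫 Z \ {∅}).ncard :=
        Set.ncard_le_mul_ncard_of_mapsTo (Set.toFinite _) (Set.toFinite _) hmaps _ hfib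
    _ = (2 * q + 1) * (2 ^ Z.ncard - 1) := by
        rw [Set.ncard_sdiff_singleton_of_mem (Set.empty_subset Z), Set.ncard_powerset]

theorem ncard_big_comp_le_one [Finite V]
    (hng : ¬ ∃ Z V1 V2 : Set V, GoodNodeSep G Vinf q k Z V1 V2) (hZV : Z ⊆ Vinfᶜ)
    (hZk : Z.ncard ≤ k) : {C | IsCompOf G Z C ∧ q < (C \ Vinf).ncard}.ncard ≤ 1 := by
  by_contra! hcard
  obtain ⟨C, hC, D, hD, hCD⟩ := (Set.one_lt_ncard (Set.toFinite _)).1 hcard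
  exact hng ⟨Z, C, D, hZk, Set.eq_empty_of_forall_notMem fun x hx => hZV hx.1 hx.2,
    hC.1, hD.1, hCD, hC.2, hD.2⟩

lemma ncard_isCompOf_empty_le_one [Finite V] (hconn : ∀ u v : V, G.Conn ∅ ∅ u v) :
    {C | IsCompOf G ∅ C}.ncard ≤ 1 := by
  refine (Set.ncard_le_one (Set.toFinite _)).2 fun C hC D hD => ?_
  obtain ⟨v, hv, rfl⟩ := hC
  obtain ⟨w, -, rfl⟩ := hD
  exact IsCompOf.eq_of_mem_of_mem ⟨v, hv, rfl⟩ ⟨w, hv, rfl⟩ (Conn.refl hv) (hconn w v)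

lemma setOf_isCompOf_subset_union :
    {C | IsCompOf G Z C ∧ ∃ x ∈ C, x ∉ Vinf} ⊆
      {C | IsSmallComp G Vinf Tb q Z C} ∪ {C | IsCompOf G Z C ∧ (C ∩ Tb).Nonempty} ∪
        {C | IsCompOf G Z C ∧ q < (C \ Vinf).ncard} := by
  rintro C ⟨hC, x, hxC, hxV⟩
  by_cases hq : (C \ Vinf).ncard ≤ q
  · rcases (C ∩ Tb).eq_empty_or_nonempty with hTb | hTb
    · exact Or.inl (Or.inl ⟨hC, ⟨x, hxC, hxV⟩, hTb, hq⟩)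
    · exact Or.inl (Or.inr ⟨hC, hTb⟩)
  · exact Or.inr ⟨hC, not_le.1 hq⟩

end Counting

theorem stmt16_general {V E : Type*} [Fintype V]
    (G : Multigraph V E)
    (Vinf Tb : Set V) (q k : ℕ)
    (hconn : ∀ u v : V, G.Conn ∅ ∅ u v)
    (hng : ¬ ∃ Z V1 V2 : Set V, GoodNodeSep G Vinf q k Z V1 V2)
    (hnf : ¬ ∃ (Z : Set V) (r : ℕ) (P : Fin r → Set V), FlowerSep G Vinf Tb q k Z P) :
    ∀ Z : Set V, Z ⊆ Vinfᶜ → Z.ncard ≤ k →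
      {C : Set V | IsCompOf G Z C ∧ ∃ x ∈ C, x ∉ Vinf}.ncard ≤
          (2 * q + 2) * (2 ^ k - 1) + Tb.ncard + 1 ∧
        {C : Set V | IsCompOf G Z C ∧ q < (C \ Vinf).ncard}.ncard ≤ 1 := by
  intro Z hZV hZk
  have hbig := ncard_big_comp_le_one hng hZV hZk
  refine ⟨?_, hbig⟩
  rcases Z.eq_empty_or_nonempty with rfl | hZ
  · exact ((Set.ncard_le_ncard fun C hC => hC.1).trans
      (ncard_isCompOf_empty_le_one hconn)).trans (Nat.le_add_left _ _)
  have hsmall : {C | IsSmallComp G Vinf Tb q Z C}.ncard ≤ (2 * q + 2) * (2 ^ k - 1) :=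
    (ncard_isSmallComp_le hconn hnf hZ hZV hZk).trans (Nat.mul_le_mul (by omega)
      (Nat.sub_le_sub_right (Nat.pow_le_pow_right two_pos hZk) 1))
  have hTb : {C | IsCompOf G Z C ∧ (C ∩ Tb).Nonempty}.ncard ≤ Tb.ncard :=
    ncard_le_ncard_of_forall_isCompOf_inter_nonempty fun C hC => hC
  calc _ ≤ _ := Set.ncard_le_ncard (setOf_isCompOf_subset_union (Tb := Tb) (q := q))
    _ ≤ _ := (Set.ncard_union_le _ _).trans (Nat.add_le_add_right (Set.ncard_union_le _ _) _)
    _ ≤ _ := by omega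

/-- If a connected graph `G` with undeletable vertices `V^∞` and
border terminals `T_b` contains neither a `(q, k)`-good node separation nor a
`(q, k)`-flower separation w.r.t. `T_b`, then for every `Z ⊆ V(G) \ V^∞` with
`|Z| ≤ k`, the graph `G − Z` has at most `(2q + 2)(2^k − 1) + |T_b| + 1` connected
components containing a vertex of `V(G) \ V^∞`, of which at most one has more than
`q` vertices not in `V^∞`. -/
theorem stmt16 {V E : Type*} [Fintype V] [Fintype E]
    (G : Multigraph V E) (hG : G.Loopless)
    (Vinf Tb : Set V) (q k : ℕ)
    (hconn : ∀ u v : V, G.Conn ∅ ∅ u v)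
    (hng : ¬ ∃ Z V1 V2 : Set V, GoodNodeSep G Vinf q k Z V1 V2)
    (hnf : ¬ ∃ (Z : Set V) (r : ℕ) (P : Fin r → Set V), FlowerSep G Vinf Tb q k Z P) :
    ∀ Z : Set V, Z ⊆ Vinfᶜ → Z.ncard ≤ k →
      {C : Set V | IsCompOf G Z C ∧ ∃ x ∈ C, x ∉ Vinf}.ncard ≤
          (2 * q + 2) * (2 ^ k - 1) + Tb.ncard + 1 ∧
        {C : Set V | IsCompOf G Z C ∧ q < (C \ Vinf).ncard}.ncard ≤ 1 :=
  stmt16_general G Vinf Tb q k hconn hng hnf
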